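/- Let (X,d,f) be a dynamical system and 𝒜 = {𝒰ₙ} a complete defining sequence of X. Define θ : X → lim←(𝒪(𝒰ₙ), ↪) by θ(x) = ((𝒰ₙ[fⁱ(x)])_{i∈ℕ})_{n∈ℕ}. Then θ is a homeomorphism and θ ∘ f = σ* ∘ θ, where σ* is the induced shift map on the inverse limit; hence (X,d,f) is topologically conjugate to the inverse limit of the systems (𝒪(𝒰ₙ), σₙ) with the refinement bonding maps. -/
import Mathlib


/-- The shift metric on `A^ℕ`: `1/(i+1)` for `i` the first disagreement index. -/
noncomputable def shiftDist {A : Type*} (x y : ℕ → A) : ℝ := by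
  classical
  exact if h : x = y then 0 else ((Nat.find (Function.ne_iff.mp h) : ℝ) + 1)⁻¹

/-- The product metric on the inverse limit of the shift spaces `𝒪(𝒰ₙ)`, where an element is
recorded as a double sequence `O : ℕ → ℕ → Set X` (level `n`, coordinate `i`). -/
noncomputable def invLimDist {X : Type*} (O O' : ℕ → ℕ → Set X) : ℝ :=
  ⨆ n : ℕ, shiftDist (O n) (O' n) / ((n : ℝ) + 1)

/-- The inverse limit of the shift spaces `𝒪(𝒰ₙ)` with the refinement bonding maps:
double sequences `(Oₙᵢ)` with each level in `𝒪(𝒰ₙ)` and levels compatible under refinement. -/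
def InvLimO {X : Type*} (f : X → X) (𝒰 : ℕ → Set (Set X)) : Set (ℕ → ℕ → Set X) :=
  {O | (∀ n, (∀ i, O n i ∈ 𝒰 n) ∧ ∀ k : ℕ, ∃ x : X, ∀ i ≤ k, f^[i] x ∈ O n i) ∧
    ∀ n i, O (n + 1) i ⊆ O n i}

lemma shiftDist_nonneg {A : Type*} (x y : ℕ → A) : 0 ≤ shiftDist x y := by
  classical
  unfold shiftDist
  split_ifs with h
  · exact le_refl 0
  · positivity

lemma shiftDist_le_one {A : Type*} (x y : ℕ → A) : shiftDist x y ≤ 1 := by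
  classical
  unfold shiftDist
  split_ifs with h
  · norm_num
  · rw [inv_le_one_iff₀]
    right
    have h0 : (0:ℝ) ≤ ((Nat.find (Function.ne_iff.mp h) : ℕ) : ℝ) := Nat.cast_nonneg _
    linarith

lemma shiftDist_le_of_agree {A : Type*} (x y : ℕ → A) (N : ℕ)
    (h : ∀ i < N, x i = y i) : shiftDist x y ≤ ((N : ℝ) + 1)⁻¹ := by
  classical
  unfold shiftDist
  split_ifs with hxy
  · positivity
  · have hfind : N ≤ Nat.find (Function.ne_iff.mp hxy) := by
      rw [Nat.le_find_iff]
      intro m hm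
      simpa using h m hm
    have h2 : ((N:ℝ)) ≤ (Nat.find (Function.ne_iff.mp hxy) : ℝ) := Nat.cast_le.mpr hfind
    exact inv_anti₀ (by positivity) (by linarith)

lemma shiftDist_zero_eq {A : Type*} (x y : ℕ → A) (h : shiftDist x y < 1) :
    x 0 = y 0 := by
  classical
  unfold shiftDist at h
  split_ifs at h with heq
  · rw [heq]
  · by_contra h0
    have hz : Nat.find (Function.ne_iff.mp heq) = 0 := Nat.find_eq_zero _ |>.mpr h0
    rw [hz] at h
    norm_num at h

/-- Let `(X,d,f)` be a dynamical system and `{𝒰ₙ}` a complete defining sequence. The map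
`θ(x) = ((𝒰ₙ[fⁱ(x)])ᵢ)ₙ` is a homeomorphism from `X` onto the inverse limit of the shift
spaces `𝒪(𝒰ₙ)` (with the product of shift metrics) satisfying `θ ∘ f = σ* ∘ θ`; hence
`(X,d,f)` is topologically conjugate to the inverse limit system. -/
theorem conjugate_to_inverse_limit_of_orbit_shifts {X : Type*} [MetricSpace X]
    (f : X → X) (hf : Continuous f)
    (𝒰 : ℕ → Set (Set X))
    (hne : ∀ n, ∀ U ∈ 𝒰 n, U.Nonempty)
    (hclopen : ∀ n, ∀ U ∈ 𝒰 n, IsClopen U)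
    (hdisj : ∀ n, ∀ U ∈ 𝒰 n, ∀ V ∈ 𝒰 n, U ≠ V → Disjoint U V)
    (hcover : ∀ n, ⋃₀ 𝒰 n = Set.univ)
    (hrefine : ∀ n, ∀ U ∈ 𝒰 (n + 1), ∃ V ∈ 𝒰 n, U ⊆ V)
    (hbasis : ∀ (x : X) (W : Set X), IsOpen W → x ∈ W → ∃ n, ∃ U ∈ 𝒰 n, x ∈ U ∧ U ⊆ W)
    (hcomplete : ∀ U : ℕ → Set X, (∀ n, U n ∈ 𝒰 n) → (∀ n, U (n + 1) ⊆ U n) →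
      (⋂ n, U n).Nonempty) :
    ∃ θ : X → (ℕ → ℕ → Set X),
      -- θ records the carriers of the orbit: `θ x n i` is the element of `𝒰 n`
      -- containing `fⁱ(x)`
      (∀ x n i, θ x n i ∈ 𝒰 n ∧ f^[i] x ∈ θ x n i) ∧
      -- θ maps into the inverse limit, injectively and onto
      (∀ x, θ x ∈ InvLimO f 𝒰) ∧
      Function.Injective θ ∧
      (∀ O ∈ InvLimO f 𝒰, ∃ x, θ x = O) ∧
      -- θ and θ⁻¹ are continuous
      (∀ x, ∀ ε > (0 : ℝ), ∃ δ > (0 : ℝ), ∀ y, dist x y < δ → invLimDist (θ x) (θ y) < ε) ∧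
      (∀ x, ∀ ε > (0 : ℝ), ∃ δ > (0 : ℝ), ∀ y, invLimDist (θ x) (θ y) < δ → dist x y < ε) ∧
      -- θ conjugates f with the induced shift map σ* on the inverse limit
      (∀ x n i, θ (f x) n i = θ x n (i + 1)) := by
  classical
  have hex : ∀ (n : ℕ) (x : X), ∃ U, U ∈ 𝒰 n ∧ x ∈ U := by
    intro n x
    have hx : x ∈ ⋃₀ 𝒰 n := by rw [hcover n]; trivial
    obtain ⟨U, hU, hxU⟩ := hx
    exact ⟨U, hU, hxU⟩
  choose C hC1 hC2 using hex
  have hsame : ∀ n U V, U ∈ 𝒰 n → V ∈ 𝒰 n → ∀ x : X, x ∈ U → x ∈ V → U = V := by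
    intro n U V hU hV x hxU hxV
    by_contra hne'
    exact (hdisj n U hU V hV hne').ne_of_mem hxU hxV rfl
  have hCeq : ∀ n U, U ∈ 𝒰 n → ∀ x, x ∈ U → C n x = U := fun n U hU x hx =>
    hsame n (C n x) U (hC1 n x) hU x (hC2 n x) hx
  have hmono : ∀ (O : ℕ → ℕ → Set X), (∀ n i, O (n+1) i ⊆ O n i) →
      ∀ i n m, n ≤ m → O m i ⊆ O n i := by
    intro O hO i n m hnm
    induction m, hnm using Nat.le_induction with
    | base => exact subset_rfl
    | succ m hm ih => exact (hO m i).trans ih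
  refine ⟨fun x n i => C n (f^[i] x), ?_, ?_, ?_, ?_, ?_, ?_, ?_⟩
  · exact fun x n i => ⟨hC1 _ _, hC2 _ _⟩
  · -- into InvLimO
    intro x
    refine ⟨fun n => ⟨fun i => hC1 _ _, fun k => ⟨x, fun i _ => hC2 _ _⟩⟩, ?_⟩
    intro n i
    obtain ⟨V, hV, hUV⟩ := hrefine n _ (hC1 (n+1) (f^[i] x))
    have hCV : C n (f^[i] x) = V := hCeq n V hV _ (hUV (hC2 _ _))
    show C (n+1) (f^[i] x) ⊆ C n (f^[i] x)
    rw [hCV]; exact hUV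
  · -- injective
    intro x y hxy
    by_contra hne'
    have hW : IsOpen ({y}ᶜ : Set X) := isClosed_singleton.isOpen_compl
    obtain ⟨n, U, hU, hxU, hUW⟩ := hbasis x {y}ᶜ hW (by simpa using hne')
    have h1 : C n x = U := hCeq n U hU x hxU
    have h2 : C n (f^[0] x) = C n (f^[0] y) := congrFun (congrFun hxy n) 0
    simp only [Function.iterate_zero_apply] at h2
    have hyU : y ∈ U := by
      have hy' : y ∈ C n y := hC2 n y
      rw [← h2, h1] at hy'
      exact hy'
    exact hUW hyU rfl
  · -- surjective
    rintro O ⟨hO1, hO2⟩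
    obtain ⟨y, hy⟩ := hcomplete (fun n => O n 0) (fun n => (hO1 n).1 0) (fun n => hO2 n 0)
    simp only [Set.mem_iInter] at hy
    refine ⟨y, ?_⟩
    funext n i
    have key : f^[i] y ∈ O n i := by
      by_contra hni
      have hWopen : IsOpen ((f^[i]) ⁻¹' (O n i)ᶜ) :=
        ((hclopen n _ ((hO1 n).1 i)).isClosed.isOpen_compl).preimage (hf.iterate i)
      obtain ⟨m', U, hU, hyU, hUW⟩ := hbasis y _ hWopen hni
      have hUeq : U = O m' 0 := hsame m' U (O m' 0) hU ((hO1 m').1 0) y hyU (hy m')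
      obtain ⟨x', hx'⟩ := (hO1 (max n m')).2 i
      have hx0 : x' ∈ O (max n m') 0 := by simpa using hx' 0 (Nat.zero_le i)
      have hxm' : x' ∈ U := by
        rw [hUeq]
        exact hmono O hO2 0 m' (max n m') (le_max_right n m') hx0
      have hni' : f^[i] x' ∉ O n i := hUW hxm'
      exact hni' (hmono O hO2 i n (max n m') (le_max_left n m') (hx' i le_rfl))
    exact hCeq n (O n i) ((hO1 n).1 i) _ key
  · -- forward continuity
    intro x ε hε
    obtain ⟨N, hN⟩ := exists_nat_gt (2/ε)
    have hN1 : (0:ℝ) < (N:ℝ) + 1 := by positivity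
    have hNε : ((N:ℝ)+1)⁻¹ < ε/2 := by
      rw [inv_lt_comm₀ hN1 (by positivity), inv_div]
      linarith
    set V := ⋂ n ∈ Finset.range N, ⋂ i ∈ Finset.range N, f^[i] ⁻¹' (C n (f^[i] x)) with hVdef
    have hVopen : IsOpen V := isOpen_biInter_finset fun n _ =>
      isOpen_biInter_finset fun i _ =>
        ((hclopen n _ (hC1 n (f^[i] x))).isOpen).preimage (hf.iterate i)
    have hxV : x ∈ V := by
      simp only [hVdef, Set.mem_iInter, Set.mem_preimage]
      intro n _ i _
      exact hC2 n (f^[i] x)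
    obtain ⟨δ, hδ, hball⟩ := Metric.isOpen_iff.mp hVopen x hxV
    refine ⟨δ, hδ, fun y hxy => ?_⟩
    have hyV : y ∈ V := hball (by rwa [Metric.mem_ball, dist_comm])
    have hagree : ∀ n < N, ∀ i < N, C n (f^[i] y) = C n (f^[i] x) := by
      intro n hn i hi
      simp only [hVdef, Set.mem_iInter, Set.mem_preimage] at hyV
      exact hCeq n _ (hC1 n (f^[i] x)) _
        (hyV n (Finset.mem_range.mpr hn) i (Finset.mem_range.mpr hi))
    have hterm : ∀ n : ℕ,
        shiftDist (fun i => C n (f^[i] x)) (fun i => C n (f^[i] y)) / ((n:ℝ)+1) ≤ ε/2 := by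
      intro n
      have hn1 : (1:ℝ) ≤ (n:ℝ)+1 := by
        have : (0:ℝ) ≤ (n:ℝ) := Nat.cast_nonneg n
        linarith
      rcases lt_or_ge n N with hn | hn
      · have h1 : shiftDist (fun i => C n (f^[i] x)) (fun i => C n (f^[i] y)) ≤ ((N:ℝ)+1)⁻¹ :=
          shiftDist_le_of_agree _ _ N (fun i hi => (hagree n hn i hi).symm)
        calc shiftDist (fun i => C n (f^[i] x)) (fun i => C n (f^[i] y)) / ((n:ℝ)+1)
            ≤ shiftDist (fun i => C n (f^[i] x)) (fun i => C n (f^[i] y)) :=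
              div_le_self (shiftDist_nonneg _ _) hn1
          _ ≤ ((N:ℝ)+1)⁻¹ := h1
          _ ≤ ε/2 := le_of_lt hNε
      · have h1 : shiftDist (fun i => C n (f^[i] x)) (fun i => C n (f^[i] y)) ≤ 1 :=
          shiftDist_le_one _ _
        calc shiftDist (fun i => C n (f^[i] x)) (fun i => C n (f^[i] y)) / ((n:ℝ)+1)
            ≤ 1 / ((n:ℝ)+1) := by
              apply div_le_div_of_nonneg_right h1 (by positivity) |>.trans_eq rfl
          _ ≤ 1 / ((N:ℝ)+1) := by
              apply one_div_le_one_div_of_le hN1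
              have : (N:ℝ) ≤ (n:ℝ) := Nat.cast_le.mpr hn
              linarith
          _ ≤ ε/2 := by rw [one_div]; exact le_of_lt hNε
    have hsup : invLimDist (fun n i => C n (f^[i] x)) (fun n i => C n (f^[i] y)) ≤ ε/2 :=
      Real.iSup_le hterm (by positivity)
    linarith
  · -- inverse continuity
    intro x ε hε
    obtain ⟨n, U, hU, hxU, hUW⟩ := hbasis x (Metric.ball x ε) Metric.isOpen_ball
      (Metric.mem_ball_self hε)
    have hn0 : (0:ℝ) < (n:ℝ)+1 := by positivity
    refine ⟨((n:ℝ)+1)⁻¹, by positivity, fun y hd => ?_⟩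
    have hbdd : BddAbove (Set.range fun m =>
        shiftDist (fun i => C m (f^[i] x)) (fun i => C m (f^[i] y)) / ((m:ℝ)+1)) := by
      refine ⟨1, ?_⟩
      rintro r ⟨m, rfl⟩
      rw [div_le_one (by positivity)]
      have h1 := shiftDist_le_one (fun i => C m (f^[i] x)) (fun i => C m (f^[i] y))
      have h2 : (0:ℝ) ≤ (m:ℝ) := Nat.cast_nonneg m
      linarith
    have hle : shiftDist (fun i => C n (f^[i] x)) (fun i => C n (f^[i] y)) / ((n:ℝ)+1)
        ≤ invLimDist (fun n i => C n (f^[i] x)) (fun n i => C n (f^[i] y)) := le_ciSup hbdd n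
    have hlt : shiftDist (fun i => C n (f^[i] x)) (fun i => C n (f^[i] y)) < 1 := by
      have h3 := lt_of_le_of_lt hle hd
      rw [div_lt_iff₀ hn0] at h3
      rwa [inv_mul_cancel₀ (ne_of_gt hn0)] at h3
    have h0 : C n (f^[0] x) = C n (f^[0] y) := shiftDist_zero_eq _ _ hlt
    simp only [Function.iterate_zero_apply] at h0
    have hyU : y ∈ U := by
      have hy' : y ∈ C n y := hC2 n y
      rw [← h0, hCeq n U hU x hxU] at hy'
      exact hy'
    have := hUW hyU
    rw [Metric.mem_ball] at this
    rwa [dist_comm]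
  · -- shift conjugacy
    intro x n i
    show C n (f^[i] (f x)) = C n (f^[i+1] x)
    rw [Function.iterate_succ_apply]
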